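/- Let A ∈ (𝕊max^∨)^{n×n} be TPSD with diagonal entries d₁ ⪰ d₂ ⪰ ⋯ ⪰ dₙ. Then for every k ∈ [n], either tr_k(A) = d₁ ⊙ ⋯ ⊙ d_k or tr_k(A) = (d₁ ⊙ ⋯ ⊙ d_k)°; in particular 𝟘 ≤ tr_k(A). If moreover A is TPD, then tr_k(A) = d₁ ⊙ ⋯ ⊙ d_k and 𝟘 < tr_k(A) for every k ∈ [n]. -/

import Mathlib

/-!
Common framework: the symmetrized tropical semiring 𝕊max over a linearly
ordered abelian group Γ, represented concretely: an element is either 𝟘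
(represented by `none`) or a pair of a modulus `c : Γ` and a sign
(positive, negative or balanced), matching the classes of the quotient
𝕋max²/ℛ described in the paper.
-/

namespace TropPaper

inductive SSign : Type
  | pos
  | neg
  | bal
  deriving DecidableEq

/-- The symmetrized tropical semiring 𝕊max(Γ): `none` is 𝟘, and
`some (c, s)` is the class of modulus `c` and sign `s`. -/
def Smax (Γ : Type) : Type := Option (Γ × SSign)

/-- Γ is divisible. -/
def DivisibleGrp (Γ : Type) [AddCommGroup Γ] : Prop :=
  ∀ k : ℕ, 0 < k → ∀ a : Γ, ∃ b : Γ, k • b = a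

section Defs

variable {Γ : Type} [AddCommGroup Γ] [LinearOrder Γ] [IsOrderedAddMonoid Γ]

/-- 𝟘 -/
def szero : Smax Γ := none

/-- 𝟙 -/
def sone : Smax Γ := some ((0 : Γ), SSign.pos)

/-- modulus |·| : 𝕊max → 𝕋max = WithBot Γ -/
def smod : Smax Γ → WithBot Γ
  | none => ⊥
  | some (c, _) => (c : WithBot Γ)

def sgnMul : SSign → SSign → SSign
  | SSign.pos, t => t
  | SSign.neg, SSign.pos => SSign.neg
  | SSign.neg, SSign.neg => SSign.pos
  | SSign.neg, SSign.bal => SSign.bal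
  | SSign.bal, _ => SSign.bal

/-- ⊕ on 𝕊max -/
def sadd : Smax Γ → Smax Γ → Smax Γ
  | none, b => b
  | some a, none => some a
  | some (c, s), some (d, t) =>
      if c < d then some (d, t)
      else if d < c then some (c, s)
      else some (c, if s = t then s else SSign.bal)

/-- ⊖ (unary) on 𝕊max -/
def sneg : Smax Γ → Smax Γ
  | none => none
  | some (c, SSign.pos) => some (c, SSign.neg)
  | some (c, SSign.neg) => some (c, SSign.pos)
  | some (c, SSign.bal) => some (c, SSign.bal)

/-- ⊙ on 𝕊max -/
def smul : Smax Γ → Smax Γ → Smax Γ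
  | none, _ => none
  | some _, none => none
  | some (c, s), some (d, t) => some (c + d, sgnMul s t)

/-- a ⊖ b -/
def ssub (a b : Smax Γ) : Smax Γ := sadd a (sneg b)

/-- a° = a ⊖ a -/
def sbal (a : Smax Γ) : Smax Γ := ssub a a

/-- the positive element with the same modulus (|·| seen inside 𝕊max⊕) -/
def sabs : Smax Γ → Smax Γ
  | none => none
  | some (c, _) => some (c, SSign.pos)

/-- multiplicative inverse (of invertible, i.e. signed nonzero, elements) -/
def sinv : Smax Γ → Smax Γ
  | none => none
  | some (c, s) => some (-c, s)

/-- a^{⊙k} -/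
def spow (a : Smax Γ) : ℕ → Smax Γ
  | 0 => sone
  | k + 1 => smul a (spow a k)

/-- membership in 𝕊max° (balanced elements together with 𝟘) -/
def IsBal : Smax Γ → Prop
  | none => True
  | some (_, s) => s = SSign.bal

/-- membership in 𝕊max⊕ (positive elements together with 𝟘) -/
def IsPos : Smax Γ → Prop
  | none => True
  | some (_, s) => s = SSign.pos

/-- membership in 𝕊max^∨ (signed elements) -/
def IsSigned : Smax Γ → Prop
  | none => True
  | some (_, s) => s ≠ SSign.bal

/-- the balance relation a ∇ b -/
def Balance (a b : Smax Γ) : Prop := IsBal (ssub a b)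

/-- a ⪯ b -/
def natLe (a b : Smax Γ) : Prop := sadd a b = b

/-- a ≤ b :⟺ b ⊖ a ∈ 𝕊max⊕ ∪ 𝕊max° -/
def sle (a b : Smax Γ) : Prop := IsPos (ssub b a) ∨ IsBal (ssub b a)

/-- a < b :⟺ b ⊖ a ∈ 𝕊max⊕ ∖ {𝟘} -/
def slt (a b : Smax Γ) : Prop := IsPos (ssub b a) ∧ ssub b a ≠ szero

/-- finite ⊕-sum over a list -/
def sumS {α : Type} (l : List α) (f : α → Smax Γ) : Smax Γ :=
  (l.map f).foldr sadd szero

/-- finite ⊙-product over a list -/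
def prodS {α : Type} (l : List α) (f : α → Smax Γ) : Smax Γ :=
  (l.map f).foldr smul sone

/-- the zero vector -/
def zeroVecS {n : ℕ} : Fin n → Smax Γ := fun _ => szero

def VecSigned {n : ℕ} (x : Fin n → Smax Γ) : Prop := ∀ i, IsSigned (x i)

def MatSigned {n : ℕ} (A : Matrix (Fin n) (Fin n) (Smax Γ)) : Prop :=
  ∀ i j, IsSigned (A i j)

def SymmS {n : ℕ} (A : Matrix (Fin n) (Fin n) (Smax Γ)) : Prop :=
  ∀ i j, A i j = A j i

/-- A ⊙ v -/
def matVecS {n : ℕ} (A : Matrix (Fin n) (Fin n) (Smax Γ)) (v : Fin n → Smax Γ) :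
    Fin n → Smax Γ :=
  fun i => sumS (List.finRange n) fun j => smul (A i j) (v j)

/-- A ⊙ B -/
def matMulS {n : ℕ} (A B : Matrix (Fin n) (Fin n) (Smax Γ)) :
    Matrix (Fin n) (Fin n) (Smax Γ) :=
  Matrix.of fun i j => sumS (List.finRange n) fun l => smul (A i l) (B l j)

/-- the identity matrix I -/
def idMatS {n : ℕ} : Matrix (Fin n) (Fin n) (Smax Γ) :=
  Matrix.of fun i j => if i = j then sone else szero

/-- xᵀ ⊙ A ⊙ x -/
def quadFormS {n : ℕ} (A : Matrix (Fin n) (Fin n) (Smax Γ)) (x : Fin n → Smax Γ) :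
    Smax Γ :=
  sumS (List.finRange n) fun i => sumS (List.finRange n) fun j =>
    smul (x i) (smul (A i j) (x j))

/-- tropical positive definiteness (the quadratic-form condition) -/
def TPD {n : ℕ} (A : Matrix (Fin n) (Fin n) (Smax Γ)) : Prop :=
  ∀ x : Fin n → Smax Γ, VecSigned x → x ≠ zeroVecS → slt szero (quadFormS A x)

/-- tropical positive semidefiniteness -/
def TPSD {n : ℕ} (A : Matrix (Fin n) (Fin n) (Smax Γ)) : Prop :=
  ∀ x : Fin n → Smax Γ, VecSigned x → x ≠ zeroVecS → sle szero (quadFormS A x)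

/-- sgn(π) ∈ {𝟙, ⊖𝟙} -/
def permSignS {n : ℕ} (π : Equiv.Perm (Fin n)) : Smax Γ :=
  if (Equiv.Perm.sign π : ℤ) = 1 then sone else sneg sone

/-- the determinant over 𝕊max -/
noncomputable def detS {n : ℕ} (M : Matrix (Fin n) (Fin n) (Smax Γ)) : Smax Γ :=
  sumS (Finset.univ : Finset (Equiv.Perm (Fin n))).toList fun π =>
    smul (permSignS π) (prodS (List.finRange n) fun i => M i (π i))

/-- the adjugate matrix over 𝕊max -/
noncomputable def adjS {n : ℕ} (M : Matrix (Fin (n+1)) (Fin (n+1)) (Smax Γ)) :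
    Matrix (Fin (n+1)) (Fin (n+1)) (Smax Γ) :=
  Matrix.of fun i j =>
    smul (spow (sneg sone) (i.val + j.val))
      (detS (Matrix.of fun a b : Fin n => M (Fin.succAbove j a) (Fin.succAbove i b)))

/-- γ ⊙ I ⊖ A -/
def charMatS {n : ℕ} (γ : Smax Γ) (A : Matrix (Fin n) (Fin n) (Smax Γ)) :
    Matrix (Fin n) (Fin n) (Smax Γ) :=
  Matrix.of fun i j => ssub (smul γ (idMatS i j)) (A i j)

/-- tr_k(A) = ⊕_{|K| = k} det(A[K,K]) -/
noncomputable def trkS {n : ℕ} (k : ℕ) (A : Matrix (Fin n) (Fin n) (Smax Γ)) : Smax Γ :=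
  sumS ((Finset.univ : Finset (Fin n)).powersetCard k).attach.toList fun K =>
    detS (Matrix.of fun a b : Fin k =>
      A (K.1.orderEmbOfFin (Finset.mem_powersetCard.mp K.2).2 a)
        (K.1.orderEmbOfFin (Finset.mem_powersetCard.mp K.2).2 b))

/-- matrix power A^{⊙k} -/
def matPowS {n : ℕ} (A : Matrix (Fin n) (Fin n) (Smax Γ)) :
    ℕ → Matrix (Fin n) (Fin n) (Smax Γ)
  | 0 => idMatS
  | k + 1 => matMulS A (matPowS A k)

/-- partial Kleene sums I ⊕ A ⊕ ⋯ ⊕ A^{⊙m} -/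
def starPartialS {n : ℕ} (A : Matrix (Fin n) (Fin n) (Smax Γ)) (m : ℕ) :
    Matrix (Fin n) (Fin n) (Smax Γ) :=
  Matrix.of fun i j => sumS (List.range (m+1)) fun k => matPowS A k i j

/-- the diagonal matrix D^(k) with diagonal (γ₁,…,γ_{k−1},𝟘,…,𝟘) (0-based k) -/
def DmatS {n : ℕ} (A : Matrix (Fin n) (Fin n) (Smax Γ)) (k : Fin n) :
    Matrix (Fin n) (Fin n) (Smax Γ) :=
  Matrix.of fun i j => if i = j ∧ i < k then A i i else szero

/-- the complementary matrix A^(k) -/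
def AmatS {n : ℕ} (A : Matrix (Fin n) (Fin n) (Smax Γ)) (k : Fin n) :
    Matrix (Fin n) (Fin n) (Smax Γ) :=
  Matrix.of fun i j => if i ≠ j ∨ k ≤ i then A i j else szero

/-- M = (γ⊙I ⊖ D^(k))^{⊙−1} ⊙ A^(k) -/
def MmatS {n : ℕ} (A : Matrix (Fin n) (Fin n) (Smax Γ)) (k : Fin n) :
    Matrix (Fin n) (Fin n) (Smax Γ) :=
  Matrix.of fun i j =>
    smul (sinv (if i < k then sneg (A i i) else A k k)) (AmatS A k i j)

/-- λ_k = (⊖𝟙)^{⊙(k−1)} ⊙ γ₁ ⊙ ⋯ ⊙ γ_{k−1} ⊙ γ^{⊙(n−k)} (0-based k, size n) -/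
def lamkS {n : ℕ} (A : Matrix (Fin n) (Fin n) (Smax Γ)) (k : Fin n) : Smax Γ :=
  smul (spow (sneg sone) k.val)
    (smul (prodS ((List.finRange n).filter (fun i => i < k)) fun i => A i i)
      (spow (A k k) (n - 1 - k.val)))

/-- irreducibility: the digraph of nonzero entries is strongly connected -/
def IrreducibleS {n : ℕ} (A : Matrix (Fin n) (Fin n) (Smax Γ)) : Prop :=
  ∀ i j : Fin n, Relation.ReflTransGen (fun a b => A a b ≠ szero) i j

/-- diagonal entries sorted non-increasingly for ⪯ -/
def DiagSortedS {n : ℕ} (A : Matrix (Fin n) (Fin n) (Smax Γ)) : Prop :=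
  ∀ i j : Fin n, i ≤ j → natLe (A j j) (A i i)

/-! 𝕋max-side notions (for the characteristic polynomial of |A|). -/

/-- finite max over a list in 𝕋max -/
def sumT {α : Type} (l : List α) (f : α → WithBot Γ) : WithBot Γ :=
  (l.map f).foldr max ⊥

/-- finite ⊙-product over a list in 𝕋max -/
def prodT {α : Type} (l : List α) (f : α → WithBot Γ) : WithBot Γ :=
  (l.map f).foldr (· + ·) (0 : WithBot Γ)

/-- the permanent over 𝕋max -/
noncomputable def perT {n : ℕ} (M : Matrix (Fin n) (Fin n) (WithBot Γ)) : WithBot Γ :=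
  sumT (Finset.univ : Finset (Equiv.Perm (Fin n))).toList fun π =>
    prodT (List.finRange n) fun i => M i (π i)

/-- coefficient of X^k in the 𝕋max-characteristic polynomial of B -/
noncomputable def charCoeffT {n : ℕ} (B : Matrix (Fin n) (Fin n) (WithBot Γ)) (k : ℕ) : WithBot Γ :=
  if k ≤ n then
    sumT ((Finset.univ : Finset (Fin n)).powersetCard (n - k)).attach.toList fun K =>
      perT (Matrix.of fun a b : Fin (n - k) =>
        B (K.1.orderEmbOfFin (Finset.mem_powersetCard.mp K.2).2 a)
          (K.1.orderEmbOfFin (Finset.mem_powersetCard.mp K.2).2 b))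
  else ⊥

/-- multiplicity of x as a 𝕋max-root of the formal polynomial of degree ≤ n
with coefficients Q: for x = ⊥ it is the lower degree, for x = c ∈ Γ it is the
difference between the largest and smallest exponents attaining
max_k (Q_k + k·c). -/
noncomputable def rootMultT (n : ℕ) (Q : ℕ → WithBot Γ) (x : WithBot Γ) : ℕ :=
  WithBot.recBotCoe
    (sInf {k | Q k ≠ ⊥})
    (fun c =>
      sSup {k | k ≤ n ∧ Q k + ((k • c : Γ) : WithBot Γ)
              = sumT (List.range (n+1)) (fun l => Q l + ((l • c : Γ) : WithBot Γ))}
        - sInf {k | k ≤ n ∧ Q k + ((k • c : Γ) : WithBot Γ)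
              = sumT (List.range (n+1)) (fun l => Q l + ((l • c : Γ) : WithBot Γ))})
    x

end Defs

/-- the signed valuation associated with a valuation v on an ordered field L -/
def svMap {Γ : Type} [AddCommGroup Γ] [LinearOrder Γ] [IsOrderedAddMonoid Γ] {L : Type} [Field L] [LinearOrder L] [IsStrictOrderedRing L]
    (v : L → WithBot Γ) (b : L) : Smax Γ :=
  if b = 0 then szero
  else if 0 < b then WithBot.recBotCoe szero (fun c => some (c, SSign.pos)) (v b)
  else WithBot.recBotCoe szero (fun c => some (c, SSign.neg)) (v b)

end TropPaper

/-!
Evaluating the quadratic form at `t e_i ⊕ w e_j`, with the sign of `w` chosen so that both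
cross terms are negative, shows that the cross term `t + |a_ij| + w` is at most the larger of
the diagonal terms `2t + |a_ii|` and `2w + |a_jj|` (strictly smaller for TPD matrices).
Choosing `t - w` to be half of `|a_jj| - |a_ii|`, which needs divisibility of Γ, gives
`2|a_ij| ≤ |a_ii| + |a_jj|`, strictly off the diagonal in the TPD case.
Pairing each entry `a_{k π(k)}` with `a_{kk}` and `a_{π(k) π(k)}` then shows that no term in
the expansion of a principal minor exceeds in modulus the diagonal term, which is positive:
the minor is the diagonal product or its balance, and it is the diagonal product when that
term strictly dominates (TPD). As the diagonal is sorted, the leading principal minor has the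
largest modulus among those of size `k`, and the same dominance argument applied to the sum
`tr_k(A)` gives the theorem.
-/

namespace TropPaper

lemma le_val_of_strictMono {k n : ℕ} {f : Fin k → Fin n} (hf : StrictMono f)
    (a : Fin k) : (a : ℕ) ≤ f a := by
  calc (a : ℕ) = (Finset.Iio a).card := (Fin.card_Iio a).symm
    _ ≤ (Finset.Iio (f a)).card :=
      Finset.card_le_card_of_injOn f (fun b hb => by simpa using hf (by simpa using hb))
        hf.injective.injOn
    _ = f a := Fin.card_Iio (f a)

lemma take_finRange_eq_map_castLE {k n : ℕ} (hkn : k ≤ n) :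
    (List.finRange n).take k = (List.finRange k).map (Fin.castLE hkn) := by
  refine List.ext_getElem (by simp [hkn]) fun i _ _ => ?_
  simp

variable {Γ : Type}

lemma smod_some (c : Γ) (s : SSign) : smod (some (c, s) : Smax Γ) = c := rfl

lemma smod_eq_bot_iff {x : Smax Γ} : smod x = ⊥ ↔ x = szero := by
  cases x with
  | none => exact iff_of_true rfl rfl
  | some p => exact iff_of_false WithBot.coe_ne_bot (Option.some_ne_none p)

lemma isPos_of_isBal {x : Smax Γ} (hs : IsSigned x) (hb : IsBal x) : IsPos x := by
  cases x with
  | none => trivial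
  | some p => exact absurd hb hs

section Addition

variable [LinearOrder Γ]

-- `Smax Γ` does not unfold to `Option` for `simp`, so `sadd` is evaluated through these
-- three equations.
lemma sadd_some_of_lt {c d : Γ} (s t : SSign) (h : c < d) :
    sadd (some (c, s)) (some (d, t)) = some (d, t) :=
  if_pos h

lemma sadd_some_of_gt {c d : Γ} (s t : SSign) (h : d < c) :
    sadd (some (c, s)) (some (d, t)) = some (c, s) :=
  (if_neg h.not_gt).trans (if_pos h)

lemma sadd_some_self (c : Γ) (s t : SSign) :
    sadd (some (c, s)) (some (c, t)) = some (c, if s = t then s else SSign.bal) :=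
  (if_neg (lt_irrefl c)).trans (if_neg (lt_irrefl c))

lemma sadd_szero_left (x : Smax Γ) : sadd szero x = x := rfl

lemma sadd_szero_right (x : Smax Γ) : sadd x szero = x := by
  cases x <;> rfl

lemma sadd_comm : ∀ x y : Smax Γ, sadd x y = sadd y x
  | none, none | none, some _ | some _, none => rfl
  | some (c, s), some (d, t) => by
    rcases lt_trichotomy c d with h | rfl | h
    · rw [sadd_some_of_lt s t h, sadd_some_of_gt t s h]
    · rw [sadd_some_self, sadd_some_self]
      by_cases hst : s = t
      · subst hst; rfl
      · rw [if_neg hst, if_neg (Ne.symm hst)]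
    · rw [sadd_some_of_gt s t h, sadd_some_of_lt t s h]

lemma sadd_self (x : Smax Γ) : sadd x x = x := by
  cases x with
  | none => rfl
  | some p => rw [sadd_some_self, if_pos rfl]

lemma smod_sadd : ∀ x y : Smax Γ, smod (sadd x y) = max (smod x) (smod y)
  | none, y => (bot_sup_eq (smod y)).symm
  | some _, none => (sup_bot_eq _).symm
  | some (c, s), some (d, t) => by
    rcases lt_trichotomy c d with h | rfl | h
    · rw [sadd_some_of_lt s t h]
      simp only [smod_some, max_eq_right (WithBot.coe_le_coe.2 h.le)]
    · rw [sadd_some_self]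
      simp only [smod_some, max_self]
    · rw [sadd_some_of_gt s t h]
      simp only [smod_some, max_eq_left (WithBot.coe_le_coe.2 h.le)]

lemma smod_le_of_natLe {x y : Smax Γ} (h : natLe x y) : smod x ≤ smod y := by
  rw [← h, smod_sadd]
  exact le_max_left _ _

lemma sadd_eq_left_of_smod_lt {x y : Smax Γ} (h : smod y < smod x) : sadd x y = x := by
  cases x with
  | none => exact absurd h not_lt_bot
  | some p =>
    cases y with
    | none => rfl
    | some q => exact sadd_some_of_gt p.2 q.2 (WithBot.coe_lt_coe.1 h)

lemma sbal_some (c : Γ) (s : SSign) : sbal (some (c, s) : Smax Γ) = some (c, SSign.bal) := by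
  cases s <;> exact (sadd_some_self c _ _).trans rfl

lemma smod_sbal (x : Smax Γ) : smod (sbal x) = smod x := by
  cases x with
  | none => rfl
  | some p => rw [sbal_some]; rfl

lemma sbal_sbal (x : Smax Γ) : sbal (sbal x) = sbal x := by
  cases x with
  | none => rfl
  | some p => rw [sbal_some, sbal_some]

lemma sadd_eq_or_eq_sbal_of_smod_le {x y : Smax Γ} (h : smod y ≤ smod x) :
    sadd x y = x ∨ sadd x y = sbal x := by
  rcases h.lt_or_eq with h | h
  · exact Or.inl (sadd_eq_left_of_smod_lt h)
  cases x with
  | none => exact Or.inl (by rw [smod_eq_bot_iff.1 h]; rfl)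
  | some p =>
    obtain ⟨c, s⟩ := p
    cases y with
    | none => exact absurd h WithBot.bot_ne_coe
    | some q =>
      obtain ⟨d, t⟩ := q
      obtain rfl : d = c := WithBot.coe_injective h
      rw [sadd_some_self, sbal_some]
      by_cases hst : s = t
      · exact Or.inl (by rw [if_pos hst])
      · exact Or.inr (by rw [if_neg hst])

lemma smod_eq_of_eq_or_eq_sbal {x z : Smax Γ} (h : z = x ∨ z = sbal x) : smod z = smod x := by
  rcases h with rfl | rfl
  exacts [rfl, smod_sbal x]

lemma sadd_eq_or_eq_sbal {x y z : Smax Γ} (hz : z = x ∨ z = sbal x) (hy : smod y ≤ smod x) :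
    sadd z y = x ∨ sadd z y = sbal x := by
  rcases sadd_eq_or_eq_sbal_of_smod_le (hy.trans_eq (smod_eq_of_eq_or_eq_sbal hz).symm) with h | h
  · rwa [h]
  · rcases hz with rfl | rfl
    · exact Or.inr h
    · rw [h, sbal_sbal]; exact Or.inr rfl

lemma isPos_sadd : ∀ {x y : Smax Γ}, IsPos x → IsPos y → IsPos (sadd x y)
  | none, _, _, hy => hy
  | some _, none, hx, _ => hx
  | some (c, s), some (d, t), hx, hy => by
    obtain rfl : s = SSign.pos := hx
    obtain rfl : t = SSign.pos := hy
    rcases lt_trichotomy c d with h | rfl | h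
    · rw [sadd_some_of_lt _ _ h]; rfl
    · rw [sadd_some_self, if_pos rfl]; rfl
    · rw [sadd_some_of_gt _ _ h]; rfl

lemma sbal_eq_self_of_isPos {x : Smax Γ} (h : IsPos (sbal x)) : sbal x = x := by
  cases x with
  | none => rfl
  | some p => rw [sbal_some] at h; exact absurd (h : SSign.bal = SSign.pos) SSign.noConfusion

lemma isBal_sbal (x : Smax Γ) : IsBal (sbal x) := by
  cases x with
  | none => trivial
  | some p => rw [sbal_some]; rfl

lemma sle_szero_iff {x : Smax Γ} : sle szero x ↔ IsPos x ∨ IsBal x := by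
  rw [sle, ssub, show sneg (szero : Smax Γ) = szero from rfl, sadd_szero_right]

lemma slt_szero_iff {x : Smax Γ} : slt szero x ↔ IsPos x ∧ x ≠ szero := by
  rw [slt, ssub, show sneg (szero : Smax Γ) = szero from rfl, sadd_szero_right]

lemma sle_szero_of_eq_or_eq_sbal {x y : Smax Γ} (hx : IsPos x) (hy : y = x ∨ y = sbal x) :
    sle szero y := by
  rcases hy with rfl | rfl
  exacts [sle_szero_iff.2 (Or.inl hx), sle_szero_iff.2 (Or.inr (isBal_sbal x))]

end Addition

section Sums

variable [LinearOrder Γ] {α : Type} {l : List α} {f : α → Smax Γ}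

lemma sumS_cons (a : α) (l : List α) (f : α → Smax Γ) :
    sumS (a :: l) f = sadd (f a) (sumS l f) := rfl

lemma smod_sumS_le {m : WithBot Γ} (h : ∀ a ∈ l, smod (f a) ≤ m) :
    smod (sumS l f) ≤ m := by
  induction l with
  | nil => exact bot_le
  | cons a l ih =>
    rw [sumS_cons, smod_sadd]
    exact max_le (h a List.mem_cons_self) (ih fun b hb => h b (List.mem_cons_of_mem a hb))

lemma smod_sumS_lt {m : WithBot Γ} (hm : m ≠ ⊥) (h : ∀ a ∈ l, smod (f a) < m) :
    smod (sumS l f) < m := by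
  induction l with
  | nil => exact bot_lt_iff_ne_bot.2 hm
  | cons a l ih =>
    rw [sumS_cons, smod_sadd]
    exact max_lt (h a List.mem_cons_self) (ih fun b hb => h b (List.mem_cons_of_mem a hb))

lemma sumS_eq_szero (h : ∀ a ∈ l, f a = szero) : sumS l f = szero := by
  induction l with
  | nil => rfl
  | cons a l ih =>
    rw [sumS_cons, h a List.mem_cons_self, sadd_szero_left]
    exact ih fun b hb => h b (List.mem_cons_of_mem a hb)

lemma isPos_sumS (h : ∀ a ∈ l, IsPos (f a)) : IsPos (sumS l f) := by
  induction l with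
  | nil => trivial
  | cons a l ih =>
    exact isPos_sadd (h a List.mem_cons_self) (ih fun b hb => h b (List.mem_cons_of_mem a hb))

lemma sumS_eq_or_eq_sbal {x : Smax Γ} (hx : ∃ a ∈ l, f a = x ∨ f a = sbal x)
    (hle : ∀ a ∈ l, smod (f a) ≤ smod x) : sumS l f = x ∨ sumS l f = sbal x := by
  induction l with
  | nil => simp at hx
  | cons a l ih =>
    have hle' : ∀ b ∈ l, smod (f b) ≤ smod x := fun b hb => hle b (List.mem_cons_of_mem a hb)
    rw [sumS_cons]
    obtain ⟨b, hb, hbx⟩ := hx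
    rcases List.mem_cons.1 hb with rfl | hb
    · exact sadd_eq_or_eq_sbal hbx (smod_sumS_le hle')
    · rw [sadd_comm]
      exact sadd_eq_or_eq_sbal (ih ⟨b, hb, hbx⟩ hle') (hle a List.mem_cons_self)

lemma sumS_eq_of_smod_lt {a₀ : α} (hl : l.Nodup) (ha₀ : a₀ ∈ l) (h0 : f a₀ ≠ szero)
    (hlt : ∀ a ∈ l, a ≠ a₀ → smod (f a) < smod (f a₀)) : sumS l f = f a₀ := by
  induction l with
  | nil => simp at ha₀
  | cons a l ih =>
    obtain ⟨hal, hl⟩ := List.nodup_cons.1 hl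
    rw [sumS_cons]
    rcases List.mem_cons.1 ha₀ with rfl | ha₀
    · refine sadd_eq_left_of_smod_lt (smod_sumS_lt (mt smod_eq_bot_iff.1 h0) fun b hb => ?_)
      exact hlt b (List.mem_cons_of_mem _ hb) (by rintro rfl; exact hal hb)
    · rw [ih hl ha₀ fun b hb => hlt b (List.mem_cons_of_mem a hb), sadd_comm]
      exact sadd_eq_left_of_smod_lt (hlt a List.mem_cons_self (by rintro rfl; exact hal ha₀))

lemma sumS_eq_single {i : α} (hl : l.Nodup) (hi : i ∈ l)
    (h : ∀ a ∈ l, a ≠ i → f a = szero) : sumS l f = f i := by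
  induction l with
  | nil => simp at hi
  | cons a l ih =>
    obtain ⟨hal, hl⟩ := List.nodup_cons.1 hl
    have h' : ∀ b ∈ l, b ≠ i → f b = szero := fun b hb => h b (List.mem_cons_of_mem a hb)
    rw [sumS_cons]
    by_cases hai : a = i
    · subst hai
      rw [sumS_eq_szero fun b hb => h' b hb (by rintro rfl; exact hal hb), sadd_szero_right]
    · rw [h a List.mem_cons_self hai, sadd_szero_left]
      exact ih hl ((List.mem_cons.1 hi).resolve_left (Ne.symm hai)) h'

lemma sumS_eq_pair {i j : α} (hl : l.Nodup) (hi : i ∈ l) (hj : j ∈ l) (hij : i ≠ j)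
    (h : ∀ a ∈ l, a ≠ i → a ≠ j → f a = szero) : sumS l f = sadd (f i) (f j) := by
  induction l with
  | nil => simp at hi
  | cons a l ih =>
    obtain ⟨hal, hl⟩ := List.nodup_cons.1 hl
    have h' : ∀ b ∈ l, b ≠ i → b ≠ j → f b = szero := fun b hb =>
      h b (List.mem_cons_of_mem a hb)
    rw [sumS_cons]
    by_cases hai : a = i
    · subst hai
      rw [sumS_eq_single hl ((List.mem_cons.1 hj).resolve_left hij.symm) fun b hb =>
        h' b hb (by rintro rfl; exact hal hb)]
    by_cases haj : a = j
    · subst haj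
      rw [sumS_eq_single hl ((List.mem_cons.1 hi).resolve_left hij) fun b hb hbi =>
        h' b hb hbi (by rintro rfl; exact hal hb), sadd_comm]
    · rw [h a List.mem_cons_self hai haj, sadd_szero_left]
      exact ih hl ((List.mem_cons.1 hi).resolve_left (Ne.symm hai))
        ((List.mem_cons.1 hj).resolve_left (Ne.symm haj)) h'

end Sums

section Multiplication

variable [AddCommGroup Γ] {α : Type}

lemma smul_szero_left (x : Smax Γ) : smul szero x = szero := rfl

lemma smul_szero_right (x : Smax Γ) : smul x szero = szero := by
  cases x <;> rfl

lemma smul_some (c d : Γ) (s t : SSign) :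
    smul (some (c, s)) (some (d, t)) = some (c + d, sgnMul s t) := rfl

lemma smul_sone_left (x : Smax Γ) : smul sone x = x := by
  cases x with
  | none => rfl
  | some p => exact (smul_some _ _ _ _).trans (by rw [zero_add]; rfl)

lemma smul_sone_right (x : Smax Γ) : smul x sone = x := by
  cases x with
  | none => rfl
  | some p => obtain ⟨c, s⟩ := p; rw [sone, smul_some, add_zero]; cases s <;> rfl

lemma smod_smul : ∀ x y : Smax Γ, smod (smul x y) = smod x + smod y
  | none, _ => (WithBot.bot_add _).symm
  | some _, none => (WithBot.add_bot _).symm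
  | some _, some _ => WithBot.coe_add _ _

lemma isPos_smul : ∀ {x y : Smax Γ}, IsPos x → IsPos y → IsPos (smul x y)
  | none, _, _, _ | some _, none, _, _ => trivial
  | some (_, s), some (_, t), hx, hy => by
    obtain rfl : s = SSign.pos := hx
    obtain rfl : t = SSign.pos := hy
    rfl

lemma prodS_cons (a : α) (l : List α) (f : α → Smax Γ) :
    prodS (a :: l) f = smul (f a) (prodS l f) := rfl

lemma prodS_map {β : Type} (l : List β) (g : β → α) (f : α → Smax Γ) :
    prodS (l.map g) f = prodS l (f ∘ g) := by
  rw [prodS, prodS, List.map_map]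

lemma smod_prodS (l : List α) (f : α → Smax Γ) :
    smod (prodS l f) = (l.map fun a => smod (f a)).sum := by
  induction l with
  | nil => rfl
  | cons a l ih => rw [prodS_cons, smod_smul, ih, List.map_cons, List.sum_cons]

lemma smod_prodS_finRange {k : ℕ} (f : Fin k → Smax Γ) :
    smod (prodS (List.finRange k) f) = ∑ a, smod (f a) := by
  rw [smod_prodS, Fin.sum_univ_def]

lemma isPos_prodS {l : List α} {f : α → Smax Γ} (h : ∀ a ∈ l, IsPos (f a)) :
    IsPos (prodS l f) := by
  induction l with
  | nil => rfl
  | cons a l ih =>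
    exact isPos_smul (h a List.mem_cons_self) (ih fun b hb => h b (List.mem_cons_of_mem a hb))

lemma prodS_ne_szero {l : List α} {f : α → Smax Γ} (h : ∀ a ∈ l, f a ≠ szero) :
    prodS l f ≠ szero := by
  induction l with
  | nil => exact Option.some_ne_none _
  | cons a l ih =>
    rw [prodS_cons, ne_eq, ← smod_eq_bot_iff, smod_smul, WithBot.add_eq_bot, not_or,
      smod_eq_bot_iff, smod_eq_bot_iff]
    exact ⟨h a List.mem_cons_self, ih fun b hb => h b (List.mem_cons_of_mem a hb)⟩

end Multiplication

section DiagonalProducts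

variable [AddCommGroup Γ] {k n : ℕ} {A : Matrix (Fin n) (Fin n) (Smax Γ)}

def diagProdS (B : Matrix (Fin k) (Fin k) (Smax Γ)) : Smax Γ :=
  prodS (List.finRange k) fun a => B a a

lemma smod_diagProdS (B : Matrix (Fin k) (Fin k) (Smax Γ)) :
    smod (diagProdS B) = ∑ a, smod (B a a) :=
  smod_prodS_finRange _

lemma smod_detS_term (B : Matrix (Fin k) (Fin k) (Smax Γ)) (π : Equiv.Perm (Fin k)) :
    smod (smul (permSignS π) (prodS (List.finRange k) fun a => B a (π a))) =
      ∑ a, smod (B a (π a)) := by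
  rw [smod_smul, smod_prodS_finRange, permSignS]
  split_ifs <;> exact zero_add _

lemma detS_term_one (B : Matrix (Fin k) (Fin k) (Smax Γ)) :
    smul (permSignS (1 : Equiv.Perm (Fin k)))
      (prodS (List.finRange k) fun a => B a ((1 : Equiv.Perm (Fin k)) a)) = diagProdS B := by
  rw [permSignS, if_pos (by simp), smul_sone_left]
  rfl

lemma prodS_take_finRange (hkn : k ≤ n) :
    prodS ((List.finRange n).take k) (fun i => A i i) =
      diagProdS (A.submatrix (Fin.castLE hkn) (Fin.castLE hkn)) := by
  rw [take_finRange_eq_map_castLE hkn, prodS_map]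
  rfl

end DiagonalProducts

section QuadraticForm

variable [AddCommGroup Γ] [LinearOrder Γ] {n : ℕ} {A : Matrix (Fin n) (Fin n) (Smax Γ)}
  {x : Fin n → Smax Γ}

lemma quadFormS_eq_of_support_single {i : Fin n} (hx : ∀ m, m ≠ i → x m = szero) :
    quadFormS A x = smul (x i) (smul (A i i) (x i)) := by
  unfold quadFormS
  rw [sumS_eq_single (List.nodup_finRange n) (List.mem_finRange i) fun p _ hp => by
      simp only [hx p hp, smul_szero_left]; exact sumS_eq_szero fun _ _ => rfl,
    sumS_eq_single (List.nodup_finRange n) (List.mem_finRange i) fun q _ hq => by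
      simp only [hx q hq, smul_szero_right]]

lemma quadFormS_eq_of_support_pair {i j : Fin n} (hij : i ≠ j)
    (hx : ∀ m, m ≠ i → m ≠ j → x m = szero) :
    quadFormS A x =
      sadd (sadd (smul (x i) (smul (A i i) (x i))) (smul (x i) (smul (A i j) (x j))))
        (sadd (smul (x j) (smul (A j i) (x i))) (smul (x j) (smul (A j j) (x j)))) := by
  have hsum : ∀ g : Fin n → Smax Γ, (∀ m, m ≠ i → m ≠ j → g m = szero) →
      sumS (List.finRange n) g = sadd (g i) (g j) := fun g hg =>
    sumS_eq_pair (List.nodup_finRange n) (List.mem_finRange i) (List.mem_finRange j) hij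
      fun m _ => hg m
  unfold quadFormS
  rw [hsum _ fun p hpi hpj => by
      simp only [hx p hpi hpj, smul_szero_left]; exact sumS_eq_szero fun _ _ => rfl,
    hsum _ fun q hqi hqj => by simp only [hx q hqi hqj, smul_szero_right],
    hsum _ fun q hqi hqj => by simp only [hx q hqi hqj, smul_szero_right]]

lemma exists_quadFormS_eq_diag (i : Fin n) :
    ∃ x, VecSigned x ∧ x ≠ zeroVecS ∧ quadFormS A x = A i i := by
  refine ⟨fun m => if m = i then sone else szero, fun m => ?_, fun h => ?_, ?_⟩
  · dsimp only
    by_cases hm : m = i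
    · rw [if_pos hm]; exact SSign.noConfusion
    · rw [if_neg hm]; trivial
  · exact Option.some_ne_none _ ((if_pos rfl).symm.trans (congrFun h i))
  · rw [quadFormS_eq_of_support_single fun m hm => if_neg hm, if_pos rfl, smul_sone_left,
      smul_sone_right]

lemma exists_quadFormS_eq_neg_cross (hsym : SymmS A) {i j : Fin n} (hij : i ≠ j) {c : Γ}
    {s : SSign} (hA : A i j = some (c, s)) (hs : s ≠ SSign.bal) (t w : Γ) :
    ∃ x, VecSigned x ∧ x ≠ zeroVecS ∧ ∃ P Q : Smax Γ,
      smod P = t + (smod (A i i) + t) ∧ smod Q = w + (smod (A j j) + w) ∧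
      quadFormS A x = sadd (sadd P (some (t + c + w, SSign.neg)))
        (sadd (some (t + c + w, SSign.neg)) Q) := by
  obtain ⟨σ, hσ, hsσ, hσs⟩ :
      ∃ σ, σ ≠ SSign.bal ∧ sgnMul s σ = SSign.neg ∧ sgnMul σ s = SSign.neg := by
    cases s
    exacts [⟨SSign.neg, SSign.noConfusion, rfl, rfl⟩,
      ⟨SSign.pos, SSign.noConfusion, rfl, rfl⟩, absurd rfl hs]
  let x : Fin n → Smax Γ := fun m =>
    if m = i then some (t, SSign.pos) else if m = j then some (w, σ) else szero
  have hxi : x i = some (t, SSign.pos) := if_pos rfl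
  have hxj : x j = some (w, σ) := (if_neg hij.symm).trans (if_pos rfl)
  have hx0 : ∀ m, m ≠ i → m ≠ j → x m = szero := fun m hmi hmj =>
    (if_neg hmi).trans (if_neg hmj)
  refine ⟨x, fun m => ?_, fun h => ?_, smul (x i) (smul (A i i) (x i)),
    smul (x j) (smul (A j j) (x j)), by rw [smod_smul, smod_smul, hxi]; rfl,
    by rw [smod_smul, smod_smul, hxj]; rfl, ?_⟩
  · by_cases hmi : m = i
    · rw [hmi, hxi]; exact SSign.noConfusion
    by_cases hmj : m = j
    · rw [hmj, hxj]; exact hσ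
    · rw [hx0 m hmi hmj]; trivial
  · exact Option.some_ne_none _ (hxi.symm.trans (congrFun h i))
  · rw [quadFormS_eq_of_support_pair hij hx0,
      ← hsym i j, hA, hxi, hxj, smul_some, smul_some, smul_some, smul_some, hsσ]
    have hcross : sgnMul σ (sgnMul s SSign.pos) = SSign.neg := by
      rw [← hσs]; cases s <;> rfl
    rw [hcross, ← add_assoc, show w + (c + t) = t + c + w by abel]
    rfl

end QuadraticForm

lemma exists_add_self_eq [AddCommGroup Γ] (hdiv : DivisibleGrp Γ) (a : Γ) :
    ∃ z : Γ, z + z = a := by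
  obtain ⟨z, hz⟩ := hdiv 2 two_pos a
  exact ⟨z, by rwa [two_nsmul] at hz⟩

section OrderedGroup

variable [AddCommGroup Γ] [LinearOrder Γ] [IsOrderedAddMonoid Γ]

lemma exists_lt_coe_add [Nontrivial Γ] (b : WithBot Γ) (c : Γ) :
    ∃ t : Γ, b < ((t + c : Γ) : WithBot Γ) := by
  obtain ⟨g, hg⟩ := exists_gt b
  lift g to Γ using hg.ne_bot
  exact ⟨g - c, by rwa [sub_add_cancel]⟩

lemma add_self_le_of_forall_le_max (hdiv : DivisibleGrp Γ) {α β c : Γ}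
    (h : ∀ t w : Γ, t + c + w ≤ max (t + (α + t)) (w + (β + w))) : c + c ≤ α + β := by
  obtain ⟨z, hz⟩ := exists_add_self_eq hdiv (β - α)
  have hzc : z + c ≤ β := by
    have := h z 0
    rwa [add_zero, zero_add, add_zero, add_left_comm, hz, add_sub_cancel, max_self] at this
  calc c + c = (z + c) + (z + c) - (z + z) := by abel
    _ ≤ β + β - (β - α) := by rw [hz]; exact sub_le_sub_right (add_le_add hzc hzc) _
    _ = α + β := by abel

lemma add_self_lt_of_forall_lt_max (hdiv : DivisibleGrp Γ) {α β c : Γ}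
    (h : ∀ t w : Γ, t + c + w < max (t + (α + t)) (w + (β + w))) : c + c < α + β := by
  obtain ⟨z, hz⟩ := exists_add_self_eq hdiv (β - α)
  have hzc : z + c < β := by
    have := h z 0
    rwa [add_zero, zero_add, add_zero, add_left_comm, hz, add_sub_cancel, max_self] at this
  calc c + c = (z + c) + (z + c) - (z + z) := by abel
    _ < β + β - (β - α) := by rw [hz]; exact sub_lt_sub_right (add_lt_add hzc hzc) _
    _ = α + β := by abel

lemma coe_add_self_le_of_forall_le_max [Nontrivial Γ] (hdiv : DivisibleGrp Γ)
    {a b : WithBot Γ} {c : Γ}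
    (h : ∀ t w : Γ, ((t + c + w : Γ) : WithBot Γ) ≤ max (t + (a + t)) (w + (b + w))) :
    (c : WithBot Γ) + c ≤ a + b := by
  cases a with
  | bot =>
    obtain ⟨t, ht⟩ := exists_lt_coe_add b c
    exact absurd (h t 0) (by simpa using ht.not_ge)
  | coe α =>
    cases b with
    | bot =>
      obtain ⟨w, hw⟩ := exists_lt_coe_add (α : WithBot Γ) c
      exact absurd (h 0 w) (by simpa [add_comm] using hw.not_ge)
    | coe β =>
      exact_mod_cast add_self_le_of_forall_le_max hdiv fun t w => by exact_mod_cast h t w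

lemma strictMono_add_self : StrictMono fun x : WithBot Γ => x + x := by
  intro x y hxy
  lift y to Γ using hxy.ne_bot
  cases x with
  | bot => exact WithBot.bot_lt_coe (y + y)
  | coe x =>
    have h := WithBot.coe_lt_coe.1 hxy
    exact WithBot.coe_lt_coe.2 (add_lt_add h h)

lemma sum_lt_sum_of_ne_bot {ι : Type} [Fintype ι] {f g : ι → WithBot Γ}
    (hle : ∀ i, f i ≤ g i) (hg : ∀ i, g i ≠ ⊥) (hlt : ∃ i, f i < g i) :
    ∑ i, f i < ∑ i, g i := by
  by_cases hf : ∃ i, f i = ⊥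
  · obtain ⟨i, hi⟩ := hf
    exact (WithBot.sum_eq_bot_iff.2 ⟨i, Finset.mem_univ i, hi⟩).trans_lt
      (WithBot.sum_lt_bot fun i _ => hg i)
  simp only [not_exists] at hf
  lift f to ι → Γ using hf
  lift g to ι → Γ using hg
  simp only [WithBot.coe_le_coe, WithBot.coe_lt_coe] at hle hlt
  rw [← WithBot.coe_sum, ← WithBot.coe_sum, WithBot.coe_lt_coe]
  obtain ⟨i, hi⟩ := hlt
  exact Finset.sum_lt_sum (fun i _ => hle i) ⟨i, Finset.mem_univ i, hi⟩

end OrderedGroup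

section DiagBounds

variable [AddCommGroup Γ] [LinearOrder Γ] {k n : ℕ}

def IsDiagBounded (B : Matrix (Fin k) (Fin k) (Smax Γ)) : Prop :=
  ∀ i j, smod (B i j) + smod (B i j) ≤ smod (B i i) + smod (B j j)

def IsStrictDiagBounded (B : Matrix (Fin k) (Fin k) (Smax Γ)) : Prop :=
  ∀ i j, i ≠ j → smod (B i j) + smod (B i j) < smod (B i i) + smod (B j j)

lemma IsStrictDiagBounded.isDiagBounded {B : Matrix (Fin k) (Fin k) (Smax Γ)}
    (hB : IsStrictDiagBounded B) : IsDiagBounded B := fun i j => by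
  by_cases hij : i = j
  · subst hij; exact le_rfl
  · exact (hB i j hij).le

lemma IsDiagBounded.submatrix {A : Matrix (Fin n) (Fin n) (Smax Γ)} (hA : IsDiagBounded A)
    (e : Fin k → Fin n) : IsDiagBounded (A.submatrix e e) :=
  fun a b => hA (e a) (e b)

lemma IsStrictDiagBounded.submatrix {A : Matrix (Fin n) (Fin n) (Smax Γ)}
    (hA : IsStrictDiagBounded A) {e : Fin k → Fin n} (he : Function.Injective e) :
    IsStrictDiagBounded (A.submatrix e e) :=
  fun a b hab => hA (e a) (e b) (he.ne hab)

variable {A : Matrix (Fin n) (Fin n) (Smax Γ)}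

lemma isPos_diag_of_tpsd (h : TPSD A) (hsgn : MatSigned A) (i : Fin n) : IsPos (A i i) := by
  obtain ⟨x, hx, hx0, hq⟩ := exists_quadFormS_eq_diag (A := A) i
  have := h x hx hx0
  rw [hq, sle_szero_iff] at this
  exact this.elim id (isPos_of_isBal (hsgn i i))

lemma szero_slt_diag_of_tpd (h : TPD A) (i : Fin n) : slt szero (A i i) := by
  obtain ⟨x, hx, hx0, hq⟩ := exists_quadFormS_eq_diag (A := A) i
  exact hq ▸ h x hx hx0

variable [IsOrderedAddMonoid Γ]

lemma isDiagBounded_of_tpsd [Nontrivial Γ] (hdiv : DivisibleGrp Γ) (h : TPSD A)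
    (hsym : SymmS A) (hsgn : MatSigned A) : IsDiagBounded A := by
  intro i j
  by_cases hij : i = j
  · subst hij; exact le_rfl
  cases hA : A i j with
  | none => exact (WithBot.bot_add _).trans_le bot_le
  | some p =>
    obtain ⟨c, s⟩ := p
    have hs : IsSigned (some (c, s) : Smax Γ) := hA ▸ hsgn i j
    refine coe_add_self_le_of_forall_le_max hdiv fun t w => not_lt.1 fun hlt => ?_
    obtain ⟨x, hx, hx0, P, Q, hP, hQ, hq⟩ := exists_quadFormS_eq_neg_cross hsym hij hA hs t w
    set N : Smax Γ := some (t + c + w, SSign.neg)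
    have hPN : smod P < smod N := hP.trans_lt (max_lt_iff.1 hlt).1
    have hQN : smod Q < smod N := hQ.trans_lt (max_lt_iff.1 hlt).2
    have hpsd := h x hx hx0
    rw [hq, sadd_comm P, sadd_eq_left_of_smod_lt hPN, sadd_eq_left_of_smod_lt hQN, sadd_self,
      sle_szero_iff] at hpsd
    exact hpsd.elim SSign.noConfusion SSign.noConfusion

lemma isStrictDiagBounded_of_tpd (hdiv : DivisibleGrp Γ) (h : TPD A) (hsym : SymmS A)
    (hsgn : MatSigned A) : IsStrictDiagBounded A := by
  intro i j hij
  have hdiag : ∀ i, smod (A i i) ≠ ⊥ := fun i =>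
    mt smod_eq_bot_iff.1 (slt_szero_iff.1 (szero_slt_diag_of_tpd h i)).2
  lift smod (A i i) to Γ using hdiag i with α hα
  lift smod (A j j) to Γ using hdiag j with β hβ
  cases hA : A i j with
  | none => exact (WithBot.bot_add _).trans_lt (WithBot.bot_lt_coe _)
  | some p =>
    obtain ⟨c, s⟩ := p
    have hs : IsSigned (some (c, s) : Smax Γ) := hA ▸ hsgn i j
    refine WithBot.coe_lt_coe.2 <|
      add_self_lt_of_forall_lt_max hdiv fun t w => not_le.1 fun hle => ?_
    obtain ⟨x, hx, hx0, P, Q, hP, hQ, hq⟩ := exists_quadFormS_eq_neg_cross hsym hij hA hs t w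
    set N : Smax Γ := some (t + c + w, SSign.neg)
    have hPN : smod P ≤ smod N := hP.trans_le (by
      rw [← hα]; exact WithBot.coe_le_coe.2 (max_le_iff.1 hle).1)
    have hQN : smod Q ≤ smod N := hQ.trans_le (by
      rw [← hβ]; exact WithBot.coe_le_coe.2 (max_le_iff.1 hle).2)
    have hPN' : sadd P N = N ∨ sadd P N = sbal N := by
      rw [sadd_comm]; exact sadd_eq_or_eq_sbal (Or.inl rfl) hPN
    have hNQ : sadd N Q = N ∨ sadd N Q = sbal N := sadd_eq_or_eq_sbal (Or.inl rfl) hQN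
    have hpd := h x hx hx0
    rw [hq] at hpd
    rcases sadd_eq_or_eq_sbal hPN' (smod_eq_of_eq_or_eq_sbal hNQ).le with h' | h' <;>
      rw [h', slt_szero_iff] at hpd
    · exact SSign.noConfusion hpd.1
    · rw [sbal_some] at hpd; exact SSign.noConfusion hpd.1

end DiagBounds

section Minors

variable [AddCommGroup Γ] [LinearOrder Γ] {k n : ℕ} {A : Matrix (Fin n) (Fin n) (Smax Γ)}
  {B : Matrix (Fin k) (Fin k) (Smax Γ)}

lemma isPos_trkS (h : ∀ e : Fin k → Fin n, StrictMono e → IsPos (detS (A.submatrix e e))) :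
    IsPos (trkS k A) :=
  isPos_sumS fun K _ => h _ (K.1.orderEmbOfFin _).strictMono

variable [IsOrderedAddMonoid Γ]

lemma sum_smod_perm_le (hB : IsDiagBounded B) (π : Equiv.Perm (Fin k)) :
    ∑ a, smod (B a (π a)) ≤ ∑ a, smod (B a a) := by
  refine strictMono_add_self.le_iff_le.1 ?_
  calc ∑ a, smod (B a (π a)) + ∑ a, smod (B a (π a))
      = ∑ a, (smod (B a (π a)) + smod (B a (π a))) := Finset.sum_add_distrib.symm
    _ ≤ ∑ a, (smod (B a a) + smod (B (π a) (π a))) := Finset.sum_le_sum fun a _ => hB a (π a)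
    _ = ∑ a, smod (B a a) + ∑ a, smod (B a a) := by
      rw [Finset.sum_add_distrib, Equiv.sum_comp π fun a => smod (B a a)]

lemma sum_smod_perm_lt (hB : IsStrictDiagBounded B) (hd : ∀ a, smod (B a a) ≠ ⊥)
    {π : Equiv.Perm (Fin k)} (hπ : π ≠ 1) :
    ∑ a, smod (B a (π a)) < ∑ a, smod (B a a) := by
  obtain ⟨a₀, ha₀⟩ : ∃ a, π a ≠ a := by
    by_contra! h
    exact hπ (Equiv.ext h)
  refine strictMono_add_self.lt_iff_lt.1 ?_
  calc ∑ a, smod (B a (π a)) + ∑ a, smod (B a (π a))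
      = ∑ a, (smod (B a (π a)) + smod (B a (π a))) := Finset.sum_add_distrib.symm
    _ < ∑ a, (smod (B a a) + smod (B (π a) (π a))) :=
      sum_lt_sum_of_ne_bot (fun a => hB.isDiagBounded a (π a))
        (fun a => WithBot.add_ne_bot.2 ⟨hd a, hd (π a)⟩)
        ⟨a₀, hB a₀ (π a₀) ha₀.symm⟩
    _ = ∑ a, smod (B a a) + ∑ a, smod (B a a) := by
      rw [Finset.sum_add_distrib, Equiv.sum_comp π fun a => smod (B a a)]

lemma detS_eq_or_eq_sbal (hB : IsDiagBounded B) :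
    detS B = diagProdS B ∨ detS B = sbal (diagProdS B) :=
  sumS_eq_or_eq_sbal ⟨1, Finset.mem_toList.2 (Finset.mem_univ 1), Or.inl (detS_term_one B)⟩
    fun π _ => by rw [smod_detS_term, smod_diagProdS]; exact sum_smod_perm_le hB π

lemma detS_eq_diagProdS (hB : IsStrictDiagBounded B) (hd : ∀ a, B a a ≠ szero) :
    detS B = diagProdS B := by
  refine (sumS_eq_of_smod_lt (Finset.nodup_toList _) (Finset.mem_toList.2 (Finset.mem_univ 1))
    ?_ fun π _ hπ => ?_).trans (detS_term_one B)
  · rw [detS_term_one]; exact prodS_ne_szero fun a _ => hd a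
  · rw [smod_detS_term, smod_detS_term]
    exact sum_smod_perm_lt hB (fun a => mt smod_eq_bot_iff.1 (hd a)) hπ

lemma smod_diagProdS_submatrix_le (hsort : DiagSortedS A) (hkn : k ≤ n)
    {e : Fin k → Fin n} (he : StrictMono e) :
    smod (diagProdS (A.submatrix e e)) ≤
      smod (diagProdS (A.submatrix (Fin.castLE hkn) (Fin.castLE hkn))) := by
  rw [smod_diagProdS, smod_diagProdS]
  exact Finset.sum_le_sum fun a _ =>
    smod_le_of_natLe (hsort _ _ (Fin.le_def.2 (le_val_of_strictMono he a)))

lemma trkS_eq_or_eq_sbal_of_minors (hsort : DiagSortedS A) (hkn : k ≤ n)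
    (hminor : ∀ e : Fin k → Fin n, StrictMono e →
      detS (A.submatrix e e) = diagProdS (A.submatrix e e) ∨
        detS (A.submatrix e e) = sbal (diagProdS (A.submatrix e e))) :
    trkS k A = prodS ((List.finRange n).take k) (fun i => A i i) ∨
      trkS k A = sbal (prodS ((List.finRange n).take k) (fun i => A i i)) := by
  let K₀ : Finset (Fin n) := Finset.univ.map (Fin.castLEEmb hkn)
  have hK₀ : K₀ ∈ (Finset.univ : Finset (Fin n)).powersetCard k := by simp [K₀]
  have hemb : ⇑(K₀.orderEmbOfFin (Finset.mem_powersetCard.1 hK₀).2) = Fin.castLE hkn :=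
    (Finset.orderEmbOfFin_unique _ (fun a => by simp [K₀]) (Fin.strictMono_castLE hkn)).symm
  rw [prodS_take_finRange hkn]
  refine sumS_eq_or_eq_sbal ⟨⟨K₀, hK₀⟩, Finset.mem_toList.2 (Finset.mem_attach _ _), ?_⟩
    fun K _ => ?_
  · simp only [hemb]
    exact hminor _ (Fin.strictMono_castLE hkn)
  · exact (smod_eq_of_eq_or_eq_sbal (hminor _ (K.1.orderEmbOfFin _).strictMono)).trans_le
      (smod_diagProdS_submatrix_le hsort hkn (K.1.orderEmbOfFin _).strictMono)

lemma trkS_eq_of_minors (hsort : DiagSortedS A) (hkn : k ≤ n) (hdiag : ∀ i, IsPos (A i i))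
    (hminor : ∀ e : Fin k → Fin n, StrictMono e →
      detS (A.submatrix e e) = diagProdS (A.submatrix e e)) :
    trkS k A = prodS ((List.finRange n).take k) (fun i => A i i) := by
  rcases trkS_eq_or_eq_sbal_of_minors hsort hkn fun e he => Or.inl (hminor e he) with h | h
  · exact h
  · refine h.trans (sbal_eq_self_of_isPos ?_)
    rw [← h]
    exact isPos_trkS fun e he => hminor e he ▸ isPos_prodS fun a _ => hdiag (e a)

end Minors

/-- for a TPSD matrix with non-increasing diagonal d₁ ⪰ ⋯ ⪰ dₙ,
tr_k(A) is d₁⊙⋯⊙d_k or its balance, and 𝟘 ≤ tr_k(A); for a TPD matrix,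
tr_k(A) = d₁⊙⋯⊙d_k and 𝟘 < tr_k(A). -/
theorem trace_of_tpsd {Γ : Type} [AddCommGroup Γ] [LinearOrder Γ] [IsOrderedAddMonoid Γ] [Nontrivial Γ]
    (hdiv : DivisibleGrp Γ) {n : ℕ}
    (A : Matrix (Fin n) (Fin n) (Smax Γ)) (hsym : SymmS A) (hsgn : MatSigned A)
    (hsort : DiagSortedS A) :
    (TPSD A → ∀ k : ℕ, 1 ≤ k → k ≤ n →
      ((trkS k A = prodS ((List.finRange n).take k) (fun i => A i i) ∨
        trkS k A = sbal (prodS ((List.finRange n).take k) (fun i => A i i))) ∧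
        sle szero (trkS k A))) ∧
    (TPD A → ∀ k : ℕ, 1 ≤ k → k ≤ n →
      (trkS k A = prodS ((List.finRange n).take k) (fun i => A i i) ∧
        slt szero (trkS k A))) := by
  constructor
  · intro hpsd k _ hkn
    have htr := trkS_eq_or_eq_sbal_of_minors hsort hkn fun e _ =>
      detS_eq_or_eq_sbal ((isDiagBounded_of_tpsd hdiv hpsd hsym hsgn).submatrix e)
    exact ⟨htr, sle_szero_of_eq_or_eq_sbal
      (isPos_prodS fun i _ => isPos_diag_of_tpsd hpsd hsgn i) htr⟩
  · intro hpd k _ hkn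
    have hdiag i := slt_szero_iff.1 (szero_slt_diag_of_tpd hpd i)
    have hA := isStrictDiagBounded_of_tpd hdiv hpd hsym hsgn
    have htr := trkS_eq_of_minors hsort hkn (fun i => (hdiag i).1) fun e he =>
      detS_eq_diagProdS (hA.submatrix he.injective) fun a => (hdiag (e a)).2
    refine ⟨htr, htr ▸ slt_szero_iff.2 ⟨?_, ?_⟩⟩
    · exact isPos_prodS fun i _ => (hdiag i).1
    · exact prodS_ne_szero fun i _ => (hdiag i).2

end TropPaper
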